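/- Let m ≥ 1 and let A₁, A₂, …, A_{2m+1} be elements of 𝔄. Define H₁(n) := {exp(A₂/n) exp(A₁/n) exp(A₃/n)} and recursively H_{k+1}(n) := {exp(A_{2k+2}/n) H_k(n) exp(A_{2k+3}/n)} for 1 ≤ k ≤ m−1, and set hₙ({A_j}) := (H_m(n))ⁿ. Then lim_{n→∞} hₙ({A_j}) = exp(∑_{j=1}^{2m+1} A_j), the limit being taken in the norm of 𝔄. -/

import Mathlib

open Filter NormedSpace


section AuxLemmas

variable (𝕜 : Type*) [RCLike 𝕜] {𝔄 : Type*} [NormedRing 𝔄]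
    [NormedAlgebra 𝕜 𝔄] [CompleteSpace 𝔄]

set_option maxHeartbeats 1000000 in
/-- Second order Taylor bound for the exponential in a Banach algebra. -/
lemma my_norm_exp_sub_one_sub_le (𝕜 : Type*) [RCLike 𝕜] [NormedAlgebra 𝕜 𝔄] (x : 𝔄) :
    ‖exp x - 1 - x‖ ≤ ‖x‖ ^ 2 * Real.exp ‖x‖ := by
  have hs : Summable fun n : ℕ => ((n.factorial : 𝕜))⁻¹ • x ^ n :=
    expSeries_summable' (𝕂 := 𝕜) x
  have hs1 : Summable fun n : ℕ => (((n + 1).factorial : 𝕜))⁻¹ • x ^ (n + 1) :=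
    (summable_nat_add_iff 1).2 hs
  have hkey : exp x - 1 - x
      = ∑' n : ℕ, (((n + 1 + 1).factorial : 𝕜))⁻¹ • x ^ (n + 1 + 1) := by
    have e2 : exp x = ∑' n : ℕ, ((n.factorial : 𝕜))⁻¹ • x ^ n := congrFun (exp_eq_tsum 𝕜) x
    have e0 : (∑' n : ℕ, ((n.factorial : 𝕜))⁻¹ • x ^ n)
        = 1 + ∑' n : ℕ, (((n + 1).factorial : 𝕜))⁻¹ • x ^ (n + 1) := by
      rw [hs.tsum_eq_zero_add]; simp
    have e1 : (∑' n : ℕ, (((n + 1).factorial : 𝕜))⁻¹ • x ^ (n + 1))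
        = x + ∑' n : ℕ, (((n + 1 + 1).factorial : 𝕜))⁻¹ • x ^ (n + 1 + 1) := by
      rw [hs1.tsum_eq_zero_add]; simp
    rw [e2, e0, e1]; abel
  rw [hkey]
  have hnorms : Summable fun n : ℕ => ‖(((n + 1 + 1).factorial : 𝕜))⁻¹ • x ^ (n + 1 + 1)‖ := by
    have h := norm_expSeries_summable' (𝕂 := 𝕜) x
    exact (summable_nat_add_iff 1).2 ((summable_nat_add_iff 1).2 h)
  have hg : Summable fun n : ℕ => ‖x‖ ^ 2 * (‖x‖ ^ n / n.factorial) :=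
    (Real.summable_pow_div_factorial ‖x‖).mul_left _
  have hterm : ∀ n : ℕ, ‖(((n + 1 + 1).factorial : 𝕜))⁻¹ • x ^ (n + 1 + 1)‖
      ≤ ‖x‖ ^ 2 * (‖x‖ ^ n / n.factorial) := by
    intro n
    rw [norm_smul, norm_inv, RCLike.norm_natCast]
    have h1 : ‖x ^ (n + 1 + 1)‖ ≤ ‖x‖ ^ (n + 1 + 1) := norm_pow_le' x (by omega)
    have h2 : (((n + 1 + 1).factorial : ℝ))⁻¹ ≤ ((n.factorial : ℝ))⁻¹ := by
      apply inv_anti₀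
      · exact_mod_cast Nat.factorial_pos n
      · exact_mod_cast Nat.factorial_le (by omega)
    calc (((n + 1 + 1).factorial : ℝ))⁻¹ * ‖x ^ (n + 1 + 1)‖
        ≤ ((n.factorial : ℝ))⁻¹ * ‖x‖ ^ (n + 1 + 1) := by
          apply mul_le_mul h2 h1 (norm_nonneg _)
          positivity
      _ = ‖x‖ ^ 2 * (‖x‖ ^ n / n.factorial) := by
          rw [show n + 1 + 1 = n + 2 by omega, pow_add]; ring
  calc ‖∑' n : ℕ, (((n + 1 + 1).factorial : 𝕜))⁻¹ • x ^ (n + 1 + 1)‖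
      ≤ ∑' n : ℕ, ‖(((n + 1 + 1).factorial : 𝕜))⁻¹ • x ^ (n + 1 + 1)‖ :=
        norm_tsum_le_tsum_norm hnorms
    _ ≤ ∑' n : ℕ, ‖x‖ ^ 2 * (‖x‖ ^ n / n.factorial) := Summable.tsum_le_tsum hterm hnorms hg
    _ = ‖x‖ ^ 2 * ∑' n : ℕ, (‖x‖ ^ n / n.factorial) := tsum_mul_left
    _ = ‖x‖ ^ 2 * Real.exp ‖x‖ := by
        congr 1
        rw [Real.exp_eq_exp_ℝ, exp_eq_tsum_div]

lemma my_norm_exp_le (𝕜 : Type*) [RCLike 𝕜] [NormedAlgebra 𝕜 𝔄] (x : 𝔄) :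
    ‖exp x‖ ≤ ‖(1 : 𝔄)‖ + ‖x‖ + ‖x‖ ^ 2 * Real.exp ‖x‖ := by
  have h := my_norm_exp_sub_one_sub_le 𝕜 x
  have hx : exp x = (exp x - 1 - x) + 1 + x := by abel
  calc ‖exp x‖ = ‖(exp x - 1 - x) + 1 + x‖ := by rw [← hx]
    _ ≤ ‖(exp x - 1 - x) + 1‖ + ‖x‖ := norm_add_le _ _
    _ ≤ ‖exp x - 1 - x‖ + ‖(1 : 𝔄)‖ + ‖x‖ := by
        gcongr
        exact norm_add_le _ _
    _ ≤ ‖(1 : 𝔄)‖ + ‖x‖ + ‖x‖ ^ 2 * Real.exp ‖x‖ := by linarith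

end AuxLemmas

/-- The Jordan triple product `{abc} = (abc + cba)/2` on a normed algebra over `𝕜`. -/
noncomputable def jordanTriple (𝕜 : Type*) [RCLike 𝕜] {𝔄 : Type*} [NormedRing 𝔄]
    [NormedAlgebra 𝕜 𝔄] (a b c : 𝔄) : 𝔄 :=
  (2 : 𝕜)⁻¹ • (a * b * c + c * b * a)

/-- `hString 𝕜 A n k` is `H_k(n)`: `H₁(n) = {exp(A₂/n) exp(A₁/n) exp(A₃/n)}` and
`H_{k+1}(n) = {exp(A_{2k+2}/n) H_k(n) exp(A_{2k+3}/n)}`. -/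
noncomputable def hString (𝕜 : Type*) [RCLike 𝕜] {𝔄 : Type*} [NormedRing 𝔄]
    [NormedAlgebra 𝕜 𝔄] (A : ℕ → 𝔄) (n : ℕ) : ℕ → 𝔄
  | 0 => 1
  | 1 => jordanTriple 𝕜 (exp ((n : 𝕜)⁻¹ • A 2)) (exp ((n : 𝕜)⁻¹ • A 1))
      (exp ((n : 𝕜)⁻¹ • A 3))
  | (k + 2) => jordanTriple 𝕜 (exp ((n : 𝕜)⁻¹ • A (2 * (k + 2))))
      (hString 𝕜 A n (k + 1)) (exp ((n : 𝕜)⁻¹ • A (2 * (k + 2) + 1)))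


section ApproxLemmas

variable (𝕜 : Type*) [RCLike 𝕜] {𝔄 : Type*} [NormedRing 𝔄]
    [NormedAlgebra 𝕜 𝔄] [CompleteSpace 𝔄]

/-- `f n = 1 + x/n + O(1/n²)`. -/
def IsApprox (f : ℕ → 𝔄) (x : 𝔄) : Prop :=
  ∃ C : ℝ, ∀ n : ℕ, 1 ≤ n → ‖f n - 1 - (n : 𝕜)⁻¹ • x‖ ≤ C / (n : ℝ) ^ 2

variable {𝕜}

lemma IsApprox.nonneg {f : ℕ → 𝔄} {x : 𝔄} {C : ℝ}
    (h : ∀ n : ℕ, 1 ≤ n → ‖f n - 1 - (n : 𝕜)⁻¹ • x‖ ≤ C / (n : ℝ) ^ 2) : 0 ≤ C := by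
  have h1 := h 1 le_rfl
  have h0 := (norm_nonneg _).trans h1
  norm_num at h0
  exact h0

lemma norm_inv_nat_smul_le (x : 𝔄) {n : ℕ} (hn : 1 ≤ n) :
    ‖(n : 𝕜)⁻¹ • x‖ = ‖x‖ / (n : ℝ) := by
  rw [norm_smul, norm_inv, RCLike.norm_natCast, div_eq_inv_mul]

lemma norm_exp_approx (x : 𝔄) {n : ℕ} (hn : 1 ≤ n) :
    ‖exp ((n : 𝕜)⁻¹ • x) - 1 - (n : 𝕜)⁻¹ • x‖ ≤ ‖x‖ ^ 2 * Real.exp ‖x‖ / (n : ℝ) ^ 2 := by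
  have hn0 : (0 : ℝ) < n := by exact_mod_cast hn
  have hn1 : (1 : ℝ) ≤ n := by exact_mod_cast hn
  have hz : ‖(n : 𝕜)⁻¹ • x‖ = ‖x‖ / (n : ℝ) := norm_inv_nat_smul_le x hn
  have hzx : ‖(n : 𝕜)⁻¹ • x‖ ≤ ‖x‖ := by
    rw [hz]
    exact div_le_self (norm_nonneg _) hn1
  calc ‖exp ((n : 𝕜)⁻¹ • x) - 1 - (n : 𝕜)⁻¹ • x‖
      ≤ ‖(n : 𝕜)⁻¹ • x‖ ^ 2 * Real.exp ‖(n : 𝕜)⁻¹ • x‖ := my_norm_exp_sub_one_sub_le 𝕜 _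
    _ ≤ (‖x‖ / (n : ℝ)) ^ 2 * Real.exp ‖x‖ := by
        rw [hz]
        gcongr
        exact div_le_self (norm_nonneg _) hn1
    _ = ‖x‖ ^ 2 * Real.exp ‖x‖ / (n : ℝ) ^ 2 := by ring

lemma isApprox_exp (x : 𝔄) : IsApprox 𝕜 (fun n => exp ((n : 𝕜)⁻¹ • x)) x :=
  ⟨‖x‖ ^ 2 * Real.exp ‖x‖, fun _ hn => norm_exp_approx x hn⟩

lemma IsApprox.mul {f g : ℕ → 𝔄} {x y : 𝔄} (hf : IsApprox 𝕜 f x) (hg : IsApprox 𝕜 g y) :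
    IsApprox 𝕜 (fun n => f n * g n) (x + y) := by
  obtain ⟨C₁, h₁⟩ := hf
  obtain ⟨C₂, h₂⟩ := hg
  have hC₁ : 0 ≤ C₁ := IsApprox.nonneg h₁
  have hC₂ : 0 ≤ C₂ := IsApprox.nonneg h₂
  refine ⟨C₂ + ‖x‖ * ‖y‖ + ‖x‖ * C₂ + C₁ * (‖(1 : 𝔄)‖ + ‖y‖ + C₂), fun n hn => ?_⟩
  have hn0 : (0 : ℝ) < n := by exact_mod_cast hn
  have hn1 : (1 : ℝ) ≤ n := by exact_mod_cast hn
  have hn2 : (0 : ℝ) < (n : ℝ) ^ 2 := by positivity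
  set u : 𝔄 := (n : 𝕜)⁻¹ • x with hu_def
  set v : 𝔄 := (n : 𝕜)⁻¹ • y with hv_def
  set e₁ : 𝔄 := f n - 1 - u with he₁_def
  set e₂ : 𝔄 := g n - 1 - v with he₂_def
  have he₁ : ‖e₁‖ ≤ C₁ / (n : ℝ) ^ 2 := h₁ n hn
  have he₂ : ‖e₂‖ ≤ C₂ / (n : ℝ) ^ 2 := h₂ n hn
  have hu : ‖u‖ ≤ ‖x‖ / (n : ℝ) := le_of_eq (norm_inv_nat_smul_le x hn)
  have hv : ‖v‖ ≤ ‖y‖ / (n : ℝ) := le_of_eq (norm_inv_nat_smul_le y hn)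
  have hfn : f n = 1 + u + e₁ := by rw [he₁_def]; abel
  have hgn : g n = 1 + v + e₂ := by rw [he₂_def]; abel
  have hsum : (n : 𝕜)⁻¹ • (x + y) = u + v := smul_add _ _ _
  have hkey : f n * g n - 1 - (n : 𝕜)⁻¹ • (x + y) = e₂ + u * v + u * e₂ + e₁ * g n := by
    rw [hsum, hfn, hgn]
    noncomm_ring
  have hgn_norm : ‖g n‖ ≤ ‖(1 : 𝔄)‖ + ‖y‖ + C₂ := by
    calc ‖g n‖ = ‖1 + v + e₂‖ := by rw [hgn]
      _ ≤ ‖(1 : 𝔄)‖ + ‖v‖ + ‖e₂‖ := norm_add₃_le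
      _ ≤ ‖(1 : 𝔄)‖ + ‖y‖ + C₂ := by
          have : ‖y‖ / (n : ℝ) ≤ ‖y‖ := div_le_self (norm_nonneg _) hn1
          have h2 : C₂ / (n : ℝ) ^ 2 ≤ C₂ := by
            apply div_le_self hC₂
            nlinarith
          linarith
  have t1 : ‖u * v‖ ≤ ‖x‖ * ‖y‖ / (n : ℝ) ^ 2 := by
    calc ‖u * v‖ ≤ ‖u‖ * ‖v‖ := norm_mul_le _ _
      _ ≤ (‖x‖ / (n : ℝ)) * (‖y‖ / (n : ℝ)) := by
          apply mul_le_mul hu hv (norm_nonneg _) (by positivity)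
      _ = ‖x‖ * ‖y‖ / (n : ℝ) ^ 2 := by ring
  have t2 : ‖u * e₂‖ ≤ ‖x‖ * C₂ / (n : ℝ) ^ 2 := by
    calc ‖u * e₂‖ ≤ ‖u‖ * ‖e₂‖ := norm_mul_le _ _
      _ ≤ ‖x‖ * (C₂ / (n : ℝ) ^ 2) := by
          apply mul_le_mul (hu.trans (div_le_self (norm_nonneg _) hn1)) he₂
            (norm_nonneg _) (norm_nonneg _)
      _ = ‖x‖ * C₂ / (n : ℝ) ^ 2 := by ring
  have t3 : ‖e₁ * g n‖ ≤ C₁ * (‖(1 : 𝔄)‖ + ‖y‖ + C₂) / (n : ℝ) ^ 2 := by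
    calc ‖e₁ * g n‖ ≤ ‖e₁‖ * ‖g n‖ := norm_mul_le _ _
      _ ≤ (C₁ / (n : ℝ) ^ 2) * (‖(1 : 𝔄)‖ + ‖y‖ + C₂) := by
          apply mul_le_mul he₁ hgn_norm (norm_nonneg _) (by positivity)
      _ = C₁ * (‖(1 : 𝔄)‖ + ‖y‖ + C₂) / (n : ℝ) ^ 2 := by ring
  calc ‖f n * g n - 1 - (n : 𝕜)⁻¹ • (x + y)‖
      = ‖e₂ + u * v + u * e₂ + e₁ * g n‖ := by rw [hkey]
    _ ≤ ‖e₂ + u * v + u * e₂‖ + ‖e₁ * g n‖ := norm_add_le _ _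
    _ ≤ (‖e₂‖ + ‖u * v‖ + ‖u * e₂‖) + ‖e₁ * g n‖ := by
        gcongr
        exact norm_add₃_le
    _ ≤ (C₂ + ‖x‖ * ‖y‖ + ‖x‖ * C₂ + C₁ * (‖(1 : 𝔄)‖ + ‖y‖ + C₂)) / (n : ℝ) ^ 2 := by
        rw [add_div, add_div, add_div]
        linarith

lemma IsApprox.half_add {f g : ℕ → 𝔄} {x : 𝔄} (hf : IsApprox 𝕜 f x) (hg : IsApprox 𝕜 g x) :
    IsApprox 𝕜 (fun n => (2 : 𝕜)⁻¹ • (f n + g n)) x := by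
  obtain ⟨C₁, h₁⟩ := hf
  obtain ⟨C₂, h₂⟩ := hg
  refine ⟨C₁ + C₂, fun n hn => ?_⟩
  have htwo : (2 : 𝕜) ≠ 0 := two_ne_zero
  have hhalf : ‖((2 : 𝕜)⁻¹)‖ ≤ 1 := by
    rw [norm_inv]
    rw [show ((2 : 𝕜)) = ((2 : ℕ) : 𝕜) by norm_num, RCLike.norm_natCast]
    norm_num
  have hkey : (2 : 𝕜)⁻¹ • (f n + g n) - 1 - (n : 𝕜)⁻¹ • x
      = (2 : 𝕜)⁻¹ • ((f n - 1 - (n : 𝕜)⁻¹ • x) + (g n - 1 - (n : 𝕜)⁻¹ • x)) := by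
    module
  calc ‖(2 : 𝕜)⁻¹ • (f n + g n) - 1 - (n : 𝕜)⁻¹ • x‖
      = ‖(2 : 𝕜)⁻¹ • ((f n - 1 - (n : 𝕜)⁻¹ • x) + (g n - 1 - (n : 𝕜)⁻¹ • x))‖ := by rw [hkey]
    _ ≤ 1 * ‖(f n - 1 - (n : 𝕜)⁻¹ • x) + (g n - 1 - (n : 𝕜)⁻¹ • x)‖ := by
        rw [norm_smul]
        apply mul_le_mul_of_nonneg_right hhalf (norm_nonneg _)
    _ ≤ ‖f n - 1 - (n : 𝕜)⁻¹ • x‖ + ‖g n - 1 - (n : 𝕜)⁻¹ • x‖ := by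
        rw [one_mul]; exact norm_add_le _ _
    _ ≤ (C₁ + C₂) / (n : ℝ) ^ 2 := by
        rw [add_div]
        exact add_le_add (h₁ n hn) (h₂ n hn)

lemma IsApprox.congr_target {f : ℕ → 𝔄} {x y : 𝔄} (h : IsApprox 𝕜 f x) (hxy : x = y) :
    IsApprox 𝕜 f y := hxy ▸ h

end ApproxLemmas

section HStringApprox

variable {𝕜 : Type*} [RCLike 𝕜] {𝔄 : Type*} [NormedRing 𝔄]
    [NormedAlgebra 𝕜 𝔄] [CompleteSpace 𝔄]

lemma hString_isApprox (A : ℕ → 𝔄) (k : ℕ) :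
    IsApprox 𝕜 (fun n => hString 𝕜 A n (k + 1))
      (∑ j ∈ Finset.Icc 1 (2 * (k + 1) + 1), A j) := by
  induction k with
  | zero =>
    have hsum : ∑ j ∈ Finset.Icc 1 (2 * (0 + 1) + 1), A j = A 1 + A 2 + A 3 := by
      rw [show 2 * (0 + 1) + 1 = 1 + 1 + 1 by ring,
        Finset.sum_Icc_succ_top (by omega), Finset.sum_Icc_succ_top (by omega),
        Finset.Icc_self, Finset.sum_singleton]
    rw [hsum]
    have h1 : IsApprox 𝕜 (fun n : ℕ =>
        exp ((n : 𝕜)⁻¹ • A 2) * exp ((n : 𝕜)⁻¹ • A 1) * exp ((n : 𝕜)⁻¹ • A 3))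
        (A 2 + A 1 + A 3) :=
      ((isApprox_exp (A 2)).mul (isApprox_exp (A 1))).mul (isApprox_exp (A 3))
    have h2 : IsApprox 𝕜 (fun n : ℕ =>
        exp ((n : 𝕜)⁻¹ • A 3) * exp ((n : 𝕜)⁻¹ • A 1) * exp ((n : 𝕜)⁻¹ • A 2))
        (A 3 + A 1 + A 2) :=
      ((isApprox_exp (A 3)).mul (isApprox_exp (A 1))).mul (isApprox_exp (A 2))
    have h3 := h1.half_add (h2.congr_target (by abel))
    have h4 := h3.congr_target (show A 2 + A 1 + A 3 = A 1 + A 2 + A 3 by abel)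
    simp only [hString, jordanTriple]
    exact h4
  | succ k ih =>
    have hsum : ∑ j ∈ Finset.Icc 1 (2 * (k + 1 + 1) + 1), A j
        = A (2 * (k + 1 + 1)) + (∑ j ∈ Finset.Icc 1 (2 * (k + 1) + 1), A j)
          + A (2 * (k + 1 + 1) + 1) := by
      rw [show 2 * (k + 1 + 1) + 1 = 2 * (k + 1) + 1 + 1 + 1 by ring,
        Finset.sum_Icc_succ_top (by omega), Finset.sum_Icc_succ_top (by omega),
        show 2 * (k + 1) + 1 + 1 = 2 * (k + 1 + 1) by ring]
      abel
    rw [hsum]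
    have h1 : IsApprox 𝕜 (fun n : ℕ =>
        exp ((n : 𝕜)⁻¹ • A (2 * (k + 1 + 1))) * hString 𝕜 A n (k + 1)
          * exp ((n : 𝕜)⁻¹ • A (2 * (k + 1 + 1) + 1)))
        (A (2 * (k + 1 + 1)) + (∑ j ∈ Finset.Icc 1 (2 * (k + 1) + 1), A j)
          + A (2 * (k + 1 + 1) + 1)) :=
      ((isApprox_exp _).mul ih).mul (isApprox_exp _)
    have h2 : IsApprox 𝕜 (fun n : ℕ =>
        exp ((n : 𝕜)⁻¹ • A (2 * (k + 1 + 1) + 1)) * hString 𝕜 A n (k + 1)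
          * exp ((n : 𝕜)⁻¹ • A (2 * (k + 1 + 1))))
        (A (2 * (k + 1 + 1) + 1) + (∑ j ∈ Finset.Icc 1 (2 * (k + 1) + 1), A j)
          + A (2 * (k + 1 + 1))) :=
      ((isApprox_exp _).mul ih).mul (isApprox_exp _)
    have h3 := h1.half_add (h2.congr_target (by abel))
    simp only [hString, jordanTriple]
    exact h3

end HStringApprox

section Core

variable (𝕜 : Type*) [RCLike 𝕜] {𝔅 : Type*} [NormedRing 𝔅]
    [NormedAlgebra 𝕜 𝔅] [CompleteSpace 𝔅]

omit [CompleteSpace 𝔅] in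
lemma my_norm_pow_le (hone : ‖(1 : 𝔅)‖ ≤ 1) {b : 𝔅} {D : ℝ} (hb : ‖b‖ ≤ D) :
    ∀ n : ℕ, ‖b ^ n‖ ≤ D ^ n
  | 0 => by simpa using hone
  | n + 1 => by
    rw [pow_succ, pow_succ]
    calc ‖b ^ n * b‖ ≤ ‖b ^ n‖ * ‖b‖ := norm_mul_le _ _
      _ ≤ D ^ n * D :=
        mul_le_mul (my_norm_pow_le hone hb n) hb (norm_nonneg _)
          (pow_nonneg ((norm_nonneg b).trans hb) n)

omit [CompleteSpace 𝔅] in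
lemma my_norm_pow_sub_pow (hone : ‖(1 : 𝔅)‖ ≤ 1) {a b : 𝔅} {D : ℝ} (hD : 1 ≤ D)
    (ha : ‖a‖ ≤ D) (hb : ‖b‖ ≤ D) :
    ∀ n : ℕ, ‖a ^ n - b ^ n‖ ≤ n * D ^ n * ‖a - b‖
  | 0 => by simp
  | n + 1 => by
    have hD0 : (0 : ℝ) ≤ D := zero_le_one.trans hD
    have key : a ^ (n + 1) - b ^ (n + 1) = a * (a ^ n - b ^ n) + (a - b) * b ^ n := by
      rw [pow_succ', pow_succ']
      noncomm_ring
    have ih := my_norm_pow_sub_pow hone hD ha hb n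
    have hbn : ‖b ^ n‖ ≤ D ^ n := my_norm_pow_le hone hb n
    have hpow : D ^ n ≤ D ^ (n + 1) := by
      rw [pow_succ]
      exact le_mul_of_one_le_right (pow_nonneg hD0 n) hD
    have h1 : ‖a * (a ^ n - b ^ n)‖ ≤ D * (n * D ^ n * ‖a - b‖) :=
      (norm_mul_le _ _).trans (mul_le_mul ha ih (norm_nonneg _) hD0)
    have h2 : ‖(a - b) * b ^ n‖ ≤ ‖a - b‖ * D ^ n :=
      (norm_mul_le _ _).trans (mul_le_mul_of_nonneg_left hbn (norm_nonneg _))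
    have h3 : D * (n * D ^ n * ‖a - b‖) = n * D ^ (n + 1) * ‖a - b‖ := by
      rw [pow_succ]; ring
    have h4 : ‖a - b‖ * D ^ n ≤ ‖a - b‖ * D ^ (n + 1) :=
      mul_le_mul_of_nonneg_left hpow (norm_nonneg _)
    calc ‖a ^ (n + 1) - b ^ (n + 1)‖ = ‖a * (a ^ n - b ^ n) + (a - b) * b ^ n‖ := by rw [key]
      _ ≤ ‖a * (a ^ n - b ^ n)‖ + ‖(a - b) * b ^ n‖ := norm_add_le _ _
      _ ≤ n * D ^ (n + 1) * ‖a - b‖ + ‖a - b‖ * D ^ (n + 1) := by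
          rw [← h3]
          exact add_le_add h1 (h2.trans h4)
      _ = (↑(n + 1) : ℝ) * D ^ (n + 1) * ‖a - b‖ := by push_cast; ring

lemma tendsto_pow_of_close (hone : ‖(1 : 𝔅)‖ ≤ 1) (S : 𝔅) (f : ℕ → 𝔅) (C : ℝ) (hC : 0 ≤ C)
    (h : ∀ n : ℕ, 1 ≤ n → ‖f n - exp ((n : 𝕜)⁻¹ • S)‖ ≤ C / (n : ℝ) ^ 2) :
    Filter.Tendsto (fun n : ℕ => f n ^ n) Filter.atTop (nhds (exp S)) := by
  set c : ℝ := ‖S‖ + ‖S‖ ^ 2 * Real.exp ‖S‖ with hc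
  have hc0 : 0 ≤ c := by positivity
  have key : ∀ n : ℕ, 1 ≤ n → ‖f n ^ n - exp S‖ ≤ Real.exp (c + C) * C / n := by
    intro n hn
    have hn0 : (0 : ℝ) < n := by exact_mod_cast hn
    have hn1 : (1 : ℝ) ≤ n := by exact_mod_cast hn
    have hknzero : (n : 𝕜) ≠ 0 := by
      simp only [ne_eq, Nat.cast_eq_zero]
      omega
    set b : 𝔅 := exp ((n : 𝕜)⁻¹ • S) with hb
    have hbpow : b ^ n = exp S := by
      letI : NormedAlgebra ℚ 𝔅 := .restrictScalars ℚ 𝕜 𝔅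
      rw [hb, ← exp_nsmul, ← Nat.cast_smul_eq_nsmul 𝕜, smul_smul,
        mul_inv_cancel₀ hknzero, one_smul]
    have hSn : ‖(n : 𝕜)⁻¹ • S‖ = ‖S‖ / n := by
      rw [norm_smul, norm_inv, RCLike.norm_natCast, div_eq_inv_mul]
    have hSn' : ‖S‖ / (n : ℝ) ≤ ‖S‖ := div_le_self (norm_nonneg _) hn1
    have hbnorm : ‖b‖ ≤ 1 + c / n := by
      have f1 : Real.exp (‖S‖ / n) ≤ Real.exp ‖S‖ := Real.exp_le_exp.2 hSn'
      have f2 : (‖S‖ / (n : ℝ)) ^ 2 ≤ ‖S‖ ^ 2 / n := by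
        rw [div_pow]
        have hnn : (n : ℝ) ≤ (n : ℝ) ^ 2 := by nlinarith
        first
        | exact div_le_div_of_nonneg_left (sq_nonneg _) hn0 hnn
        | exact div_le_div_of_le_left (sq_nonneg _) hn0 hnn
      have f3 : (‖S‖ / (n : ℝ)) ^ 2 * Real.exp (‖S‖ / n) ≤ ‖S‖ ^ 2 / n * Real.exp ‖S‖ :=
        mul_le_mul f2 f1 (Real.exp_pos _).le (by positivity)
      calc ‖b‖ ≤ ‖(1 : 𝔅)‖ + ‖(n : 𝕜)⁻¹ • S‖ + ‖(n : 𝕜)⁻¹ • S‖ ^ 2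
            * Real.exp ‖(n : 𝕜)⁻¹ • S‖ := my_norm_exp_le 𝕜 _
        _ = ‖(1 : 𝔅)‖ + ‖S‖ / n + (‖S‖ / n) ^ 2 * Real.exp (‖S‖ / n) := by rw [hSn]
        _ ≤ 1 + ‖S‖ / n + ‖S‖ ^ 2 / n * Real.exp ‖S‖ := by linarith
        _ = 1 + c / n := by rw [hc, add_div]; ring
    have hfb : ‖f n - b‖ ≤ C / (n : ℝ) ^ 2 := h n hn
    have hCn : C / (n : ℝ) ^ 2 ≤ C / n := by
      rw [pow_two, ← div_div]
      exact div_le_self (div_nonneg hC hn0.le) hn1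
    have hfnorm : ‖f n‖ ≤ 1 + (c + C) / n := by
      have : f n = b + (f n - b) := by abel
      calc ‖f n‖ = ‖b + (f n - b)‖ := by rw [← this]
        _ ≤ ‖b‖ + ‖f n - b‖ := norm_add_le _ _
        _ ≤ (1 + c / n) + C / n := by linarith
        _ = 1 + (c + C) / n := by rw [add_div]; ring
    set D : ℝ := 1 + (c + C) / n with hD
    have hD1 : 1 ≤ D := by
      rw [hD]
      have : 0 ≤ (c + C) / n := div_nonneg (by linarith) hn0.le
      linarith
    have hbD : ‖b‖ ≤ D := by
      rw [hD]
      have : c / n ≤ (c + C) / n := by gcongr <;> linarith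
      linarith
    have hDn : D ^ n ≤ Real.exp (c + C) := by
      have h1 : D ≤ Real.exp ((c + C) / n) := by
        rw [hD]
        have := Real.add_one_le_exp ((c + C) / n)
        linarith
      calc D ^ n ≤ (Real.exp ((c + C) / n)) ^ n :=
            pow_le_pow_left₀ (by linarith) h1 n
        _ = Real.exp ((n : ℝ) * ((c + C) / n)) := by rw [Real.exp_nat_mul]
        _ = Real.exp (c + C) := by
            congr 1
            field_simp
    calc ‖f n ^ n - exp S‖ = ‖f n ^ n - b ^ n‖ := by rw [hbpow]
      _ ≤ n * D ^ n * ‖f n - b‖ := my_norm_pow_sub_pow hone hD1 hfnorm hbD n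
      _ ≤ n * Real.exp (c + C) * (C / (n : ℝ) ^ 2) := by
          apply mul_le_mul _ hfb (norm_nonneg _) (by positivity)
          exact mul_le_mul_of_nonneg_left hDn hn0.le
      _ = Real.exp (c + C) * C / n := by
          field_simp
  rw [tendsto_iff_norm_sub_tendsto_zero]
  apply squeeze_zero' (Filter.Eventually.of_forall fun n => norm_nonneg _)
    (Filter.eventually_atTop.2 ⟨1, key⟩)
    (tendsto_const_div_atTop_nhds_zero_nat _)

end Core

section Main

variable (𝕜 : Type*) [RCLike 𝕜] {𝔄 : Type*} [NormedRing 𝔄]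
    [NormedAlgebra 𝕜 𝔄] [CompleteSpace 𝔄]

/-- Left multiplication, as a ring homomorphism into continuous linear endomorphisms. -/
noncomputable def lmulRingHom : 𝔄 →+* (𝔄 →L[𝕜] 𝔄) where
  toFun a := ContinuousLinearMap.mul 𝕜 𝔄 a
  map_one' := by ext y; simp [ContinuousLinearMap.mul_apply']
  map_mul' a b := by ext y; simp [ContinuousLinearMap.mul_apply', mul_assoc]
  map_zero' := by ext y; simp [ContinuousLinearMap.mul_apply']
  map_add' a b := by ext y; simp [ContinuousLinearMap.mul_apply', add_mul]

theorem lieTrotter_hString' (m : ℕ) (hm : 1 ≤ m) (A : ℕ → 𝔄) :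
    Filter.Tendsto (fun n : ℕ => (hString 𝕜 A n m) ^ n) Filter.atTop
      (nhds (exp (∑ j ∈ Finset.Icc 1 (2 * m + 1), A j))) := by
  obtain ⟨k, rfl⟩ : ∃ k, m = k + 1 := ⟨m - 1, by omega⟩
  set S : 𝔄 := ∑ j ∈ Finset.Icc 1 (2 * (k + 1) + 1), A j with hS
  obtain ⟨C₀, hC₀⟩ := hString_isApprox (𝕜 := 𝕜) A k
  have hC0 : 0 ≤ C₀ := IsApprox.nonneg hC₀
  set ρ : 𝔄 →+* (𝔄 →L[𝕜] 𝔄) := lmulRingHom 𝕜 with hρ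
  have hρcont : Continuous ρ := (ContinuousLinearMap.mul 𝕜 𝔄).continuous
  have hρnorm : ∀ x : 𝔄, ‖ρ x‖ ≤ ‖x‖ := fun x =>
    ContinuousLinearMap.opNorm_mul_apply_le 𝕜 𝔄 x
  have hρsmul : ∀ (c : 𝕜) (x : 𝔄), ρ (c • x) = c • ρ x := fun c x =>
    (ContinuousLinearMap.mul 𝕜 𝔄).map_smul c x
  set T : 𝔄 →L[𝕜] 𝔄 := ρ S with hT
  set C : ℝ := C₀ + ‖T‖ ^ 2 * Real.exp ‖T‖ with hCdef
  have hC : 0 ≤ C := by positivity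
  have hg : ∀ n : ℕ, 1 ≤ n →
      ‖ρ (hString 𝕜 A n (k + 1)) - exp ((n : 𝕜)⁻¹ • T)‖ ≤ C / (n : ℝ) ^ 2 := by
    intro n hn
    have e1 : ρ (hString 𝕜 A n (k + 1)) - 1 - (n : 𝕜)⁻¹ • T
        = ρ (hString 𝕜 A n (k + 1) - 1 - (n : 𝕜)⁻¹ • S) := by
      rw [map_sub, map_sub, map_one, hρsmul]
    have b1 : ‖ρ (hString 𝕜 A n (k + 1)) - 1 - (n : 𝕜)⁻¹ • T‖ ≤ C₀ / (n : ℝ) ^ 2 :=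
      e1 ▸ (hρnorm _).trans (hC₀ n hn)
    have b2 : ‖exp ((n : 𝕜)⁻¹ • T) - 1 - (n : 𝕜)⁻¹ • T‖
        ≤ ‖T‖ ^ 2 * Real.exp ‖T‖ / (n : ℝ) ^ 2 := norm_exp_approx T hn
    have e2 : ρ (hString 𝕜 A n (k + 1)) - exp ((n : 𝕜)⁻¹ • T)
        = (ρ (hString 𝕜 A n (k + 1)) - 1 - (n : 𝕜)⁻¹ • T)
          - (exp ((n : 𝕜)⁻¹ • T) - 1 - (n : 𝕜)⁻¹ • T) := by abel
    calc ‖ρ (hString 𝕜 A n (k + 1)) - exp ((n : 𝕜)⁻¹ • T)‖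
        ≤ ‖ρ (hString 𝕜 A n (k + 1)) - 1 - (n : 𝕜)⁻¹ • T‖
          + ‖exp ((n : 𝕜)⁻¹ • T) - 1 - (n : 𝕜)⁻¹ • T‖ := by
          rw [e2]; exact norm_sub_le _ _
      _ ≤ C₀ / (n : ℝ) ^ 2 + ‖T‖ ^ 2 * Real.exp ‖T‖ / (n : ℝ) ^ 2 := add_le_add b1 b2
      _ = C / (n : ℝ) ^ 2 := by rw [hCdef, add_div]
  have hone : ‖(1 : 𝔄 →L[𝕜] 𝔄)‖ ≤ 1 := by
    rw [ContinuousLinearMap.one_def]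
    exact ContinuousLinearMap.norm_id_le
  have hmain := tendsto_pow_of_close 𝕜 hone T (fun n => ρ (hString 𝕜 A n (k + 1))) C hC hg
  have hexpT : exp T = ρ (exp S) := by
    letI : NormedAlgebra ℚ 𝔄 := .restrictScalars ℚ 𝕜 𝔄
    letI : Algebra ℚ (𝔄 →L[𝕜] 𝔄) := (NormedAlgebra.restrictScalars ℚ 𝕜 (𝔄 →L[𝕜] 𝔄)).toAlgebra
    exact (map_exp ρ hρcont S).symm
  rw [tendsto_iff_norm_sub_tendsto_zero]
  have hbound : ∀ n : ℕ, ‖hString 𝕜 A n (k + 1) ^ n - exp S‖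
      ≤ ‖(1 : 𝔄)‖ * ‖(ρ (hString 𝕜 A n (k + 1))) ^ n - exp T‖ := by
    intro n
    have e : (ρ (hString 𝕜 A n (k + 1))) ^ n - exp T
        = ρ (hString 𝕜 A n (k + 1) ^ n - exp S) := by
      rw [map_sub, map_pow, hexpT]
    rw [e]
    set x : 𝔄 := hString 𝕜 A n (k + 1) ^ n - exp S with hx
    have happ : (ρ x) 1 = x := by
      show ContinuousLinearMap.mul 𝕜 𝔄 x 1 = x
      rw [ContinuousLinearMap.mul_apply', mul_one]
    calc ‖x‖ = ‖(ρ x) 1‖ := by rw [happ]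
      _ ≤ ‖ρ x‖ * ‖(1 : 𝔄)‖ := (ρ x).le_opNorm 1
      _ = ‖(1 : 𝔄)‖ * ‖ρ x‖ := mul_comm _ _
  apply squeeze_zero (fun n => norm_nonneg _) hbound
  have h0 := (tendsto_iff_norm_sub_tendsto_zero.1 hmain).const_mul ‖(1 : 𝔄)‖
  simpa using h0

end Main

theorem lieTrotter_hString (𝕜 : Type*) [RCLike 𝕜] {𝔄 : Type*} [NormedRing 𝔄]
    [NormedAlgebra 𝕜 𝔄] [CompleteSpace 𝔄] (m : ℕ) (hm : 1 ≤ m) (A : ℕ → 𝔄) :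
    Filter.Tendsto (fun n : ℕ => (hString 𝕜 A n m) ^ n) Filter.atTop
      (nhds (exp (∑ j ∈ Finset.Icc 1 (2 * m + 1), A j))) := by
  exact lieTrotter_hString' 𝕜 m hm A
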